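/- For every real λ, the linear map v ↦ (x ↦ Y(x;λ)·v) restricts to a linear isomorphism from the null space Null(W(λ)) of W(λ) onto the vector space of all twice continuously differentiable φ : [0,π] → ℝ^N satisfying -φ'' + P·φ = λ·φ, B·φ'(0) + A·φ(0) = 0 and ℬ·φ'(π) + 𝒜·φ(π) = 0. In particular, the multiplicity of λ as an eigenvalue of (P,A,B,𝒜,ℬ) equals dim Null(W(λ)). -/

import Mathlib

open Matrix MeasureTheory Set Filter

attribute [local instance] Matrix.normedAddCommGroup Matrix.normedSpace

/-- `φ` is a (C²) solution of the boundary value problem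
`-φ'' + P·φ = l·φ`, `B·φ'(0) + A·φ(0) = 0`, `ℬ·φ'(π) + 𝒜·φ(π) = 0`. -/
def SLSol (N : ℕ) (P : ℝ → Matrix (Fin N) (Fin N) ℝ)
    (A B 𝒜 ℬ : Matrix (Fin N) (Fin N) ℝ) (l : ℝ) (φ : ℝ → Fin N → ℝ) : Prop :=
  ContDiff ℝ 2 φ ∧
    (∀ x ∈ Set.Icc (0:ℝ) Real.pi, -(deriv (deriv φ) x) + P x *ᵥ φ x = l • φ x) ∧
    B *ᵥ deriv φ 0 + A *ᵥ φ 0 = 0 ∧ ℬ *ᵥ deriv φ Real.pi + 𝒜 *ᵥ φ Real.pi = 0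

/-- The space of solutions of the boundary value problem, viewed as functions on `[0,π]`,
has dimension `m`; i.e. `l` is an eigenvalue of multiplicity `m` (an eigenvalue when `m ≥ 1`). -/
def HasMultiplicity (N : ℕ) (P : ℝ → Matrix (Fin N) (Fin N) ℝ)
    (A B 𝒜 ℬ : Matrix (Fin N) (Fin N) ℝ) (l : ℝ) (m : ℕ) : Prop :=
  ∃ b : Fin m → ℝ → Fin N → ℝ,
    (∀ i, SLSol N P A B 𝒜 ℬ l (b i)) ∧
    (∀ d : Fin m → ℝ, (∀ x ∈ Set.Icc (0:ℝ) Real.pi, ∑ i, d i • b i x = 0) → d = 0) ∧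
    (∀ φ, SLSol N P A B 𝒜 ℬ l φ → ∃ d : Fin m → ℝ,
      ∀ x ∈ Set.Icc (0:ℝ) Real.pi, φ x = ∑ i, d i • b i x)

/-!
A solution of `-φ'' + Pφ = λφ` is determined by its Cauchy data `(φ(0), φ'(0))` (uniqueness for
linear ODEs, via Grönwall). Since `B Aᵀ = A Bᵀ` and `[A, B]` has rank `N`, the Cauchy data allowed
by the left boundary condition are exactly `(Bᵀ v, -Aᵀ v) = (Y(0) v, Y'(0) v)`, with `v` unique.
Hence the solutions satisfying the left condition are exactly the functions `Y(·) v`, and for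
these the right boundary condition reads `W v = 0`.
-/

namespace Matrix

variable {m n : Type*} [Fintype m] [Fintype n]

noncomputable def mulVecConstCLM (v : n → ℝ) : Matrix m n ℝ →L[ℝ] m → ℝ :=
  LinearMap.toContinuousLinearMap ((mulVecBilin ℝ ℝ).flip v)

end Matrix

section MatrixValued

variable {m n : Type*} [Fintype m] [Fintype n] {Y : ℝ → Matrix m n ℝ}

theorem HasDerivAt.mulVec_const {Y' : Matrix m n ℝ} {x : ℝ} (hY : HasDerivAt Y Y' x)
    (v : n → ℝ) : HasDerivAt (fun x => Y x *ᵥ v) (Y' *ᵥ v) x :=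
  (mulVecConstCLM (m := m) v).hasFDerivAt.comp_hasDerivAt x hY

theorem ContDiff.mulVec_const {k : WithTop ℕ∞} (hY : ContDiff ℝ k Y) (v : n → ℝ) :
    ContDiff ℝ k (fun x => Y x *ᵥ v) :=
  (mulVecConstCLM (m := m) v).contDiff.comp hY

theorem ContinuousOn.mulVec_const {s : Set ℝ} (hY : ContinuousOn Y s) (v : n → ℝ) :
    ContinuousOn (fun x => Y x *ᵥ v) s :=
  (mulVecConstCLM (m := m) v).continuous.comp_continuousOn hY

theorem deriv_mulVec_const {x : ℝ} (hY : DifferentiableAt ℝ Y x) (v : n → ℝ) :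
    deriv (fun x => Y x *ᵥ v) x = deriv Y x *ᵥ v :=
  (hY.hasDerivAt.mulVec_const v).deriv

theorem deriv_deriv_mulVec_const (hY : ContDiff ℝ 2 Y) (v : n → ℝ) (x : ℝ) :
    deriv (deriv fun x => Y x *ᵥ v) x = deriv (deriv Y) x *ᵥ v := by
  have hderiv : deriv (fun x => Y x *ᵥ v) = fun x => deriv Y x *ᵥ v :=
    funext fun x => deriv_mulVec_const (hY.differentiable two_ne_zero x) v
  rw [hderiv]
  exact deriv_mulVec_const (hY.differentiable_deriv_two x) v

end MatrixValued

theorem deriv_eq_of_eqOn_Icc {E : Type*} [NormedAddCommGroup E] [NormedSpace ℝ E]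
    {f g : ℝ → E} {a b x : ℝ} (hab : a < b) (hx : x ∈ Icc a b) (hf : DifferentiableAt ℝ f x)
    (hg : DifferentiableAt ℝ g x) (h : EqOn f g (Icc a b)) : deriv f x = deriv g x := by
  rw [← hf.derivWithin (uniqueDiffOn_Icc hab x hx), ← hg.derivWithin (uniqueDiffOn_Icc hab x hx)]
  exact derivWithin_congr h (h hx)

namespace Matrix

variable {K : Type*} [Field K] {m n m₁ m₂ : Type*} [Fintype n] [Fintype m₁] [Fintype m₂]

theorem mulVec_injective_of_rank_eq_card {M : Matrix m n K} (h : M.rank = Fintype.card n) :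
    Function.Injective M.mulVec := by
  have hker := LinearMap.finrank_range_add_finrank_ker M.mulVecLin
  rw [Module.finrank_fintype_fun_eq_card, ← rank, h, add_eq_left, Submodule.finrank_eq_zero,
    LinearMap.ker_eq_bot] at hker
  exact hker

theorem eq_zero_of_transpose_mulVec_eq_zero {A : Matrix n m₁ K} {B : Matrix n m₂ K}
    (hrk : (fromCols A B).rank = Fintype.card n) {u : n → K} (hA : Aᵀ *ᵥ u = 0)
    (hB : Bᵀ *ᵥ u = 0) : u = 0 := by
  have hinj : Function.Injective (fromRows Aᵀ Bᵀ).mulVec :=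
    mulVec_injective_of_rank_eq_card (by rw [← transpose_fromCols, rank_transpose, hrk])
  exact hinj (by rw [fromRows_mulVec, hA, hB, mulVec_zero, Sum.elim_zero_zero])

theorem ker_fromCols_mulVecLin_eq_range {A B : Matrix n n K} (hAB : B * Aᵀ = A * Bᵀ)
    (hrk : (fromCols A B).rank = Fintype.card n) :
    LinearMap.ker (fromCols A B).mulVecLin = LinearMap.range (fromRows Bᵀ (-Aᵀ)).mulVecLin := by
  have hle :
      LinearMap.range (fromRows Bᵀ (-Aᵀ)).mulVecLin ≤ LinearMap.ker (fromCols A B).mulVecLin := by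
    rw [LinearMap.range_le_ker_iff, ← mulVecLin_mul, fromCols_mul_fromRows, mul_neg, ← hAB,
      add_neg_cancel, mulVecLin_zero]
  have hinj : Function.Injective (fromRows Bᵀ (-Aᵀ)).mulVec := fun v w hvw => by
    have h0 : fromRows Bᵀ (-Aᵀ) *ᵥ (v - w) = 0 := by rw [mulVec_sub, hvw, sub_self]
    rw [fromRows_mulVec] at h0
    rw [← sub_eq_zero]
    refine eq_zero_of_transpose_mulVec_eq_zero hrk ?_ ?_
    · ext i; simpa [neg_mulVec] using congrFun h0 (Sum.inr i)
    · ext i; simpa using congrFun h0 (Sum.inl i)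
  have hker := LinearMap.finrank_range_add_finrank_ker (fromCols A B).mulVecLin
  rw [Module.finrank_fintype_fun_eq_card, ← rank, hrk, Fintype.card_sum] at hker
  refine (Submodule.eq_of_le_of_finrank_le hle ?_).symm
  rw [LinearMap.finrank_range_of_inj hinj, Module.finrank_fintype_fun_eq_card]
  omega

end Matrix

section LinearODE

variable {E : Type*} [NormedAddCommGroup E] [NormedSpace ℝ E] {a b : ℝ}

theorem eqOn_Icc_of_hasDerivWithinAt_clm {F : ℝ → E →L[ℝ] E} (hF : ContinuousOn F (Icc a b))
    {f g : ℝ → E} (hf : ContinuousOn f (Icc a b))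
    (hf' : ∀ t ∈ Ico a b, HasDerivWithinAt f (F t (f t)) (Ici t) t)
    (hg : ContinuousOn g (Icc a b))
    (hg' : ∀ t ∈ Ico a b, HasDerivWithinAt g (F t (g t)) (Ici t) t) (ha : f a = g a) :
    EqOn f g (Icc a b) := by
  obtain ⟨C, hC⟩ := isCompact_Icc.exists_bound_of_continuousOn hF
  have hlip : ∀ t ∈ Ico a b, LipschitzOnWith C.toNNReal (F t) univ := fun t ht =>
    ((F t).lipschitz.weaken
      (NNReal.le_toNNReal_of_coe_le (hC t (Ico_subset_Icc_self ht)))).lipschitzOnWith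
  exact ODE_solution_unique_of_mem_Icc_right hlip hf hf' (fun _ _ => trivial) hg hg'
    (fun _ _ => trivial) ha

theorem eqOn_Icc_of_deriv_deriv_eq [FiniteDimensional ℝ E] {Q : ℝ → E →L[ℝ] E}
    (hQ : ContinuousOn Q (Icc a b)) {f g : ℝ → E} (hf : ContDiff ℝ 2 f) (hg : ContDiff ℝ 2 g)
    (hf'' : ∀ t ∈ Icc a b, deriv (deriv f) t = Q t (f t))
    (hg'' : ∀ t ∈ Icc a b, deriv (deriv g) t = Q t (g t))
    (ha : f a = g a) (ha' : deriv f a = deriv g a) :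
    ∀ t ∈ Icc a b, f t = g t ∧ deriv f t = deriv g t := by
  let F : ℝ → E × E →L[ℝ] E × E := fun t =>
    (ContinuousLinearMap.snd ℝ E E).prod ((Q t).comp (ContinuousLinearMap.fst ℝ E E))
  have hF : ContinuousOn F (Icc a b) := continuousOn_clm_apply.2 fun z =>
    continuousOn_const.prodMk (continuousOn_clm_apply.1 hQ z.1)
  have hpair : ∀ {u : ℝ → E}, ContDiff ℝ 2 u → (∀ t ∈ Icc a b, deriv (deriv u) t = Q t (u t)) →
      ∀ t ∈ Ico a b,
        HasDerivWithinAt (fun s => (u s, deriv u s)) (F t (u t, deriv u t)) (Ici t) t := by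
    intro u hu hu'' t ht
    have := (hu.differentiable two_ne_zero t).hasDerivAt.prodMk
      (hu.differentiable_deriv_two t).hasDerivAt
    simpa [F, hu'' t (Ico_subset_Icc_self ht)] using this.hasDerivWithinAt
  have hcont : ∀ {u : ℝ → E}, ContDiff ℝ 2 u → ContinuousOn (fun s => (u s, deriv u s)) (Icc a b) :=
    fun hu => (hu.continuous.prodMk (hu.continuous_deriv one_le_two)).continuousOn
  intro t ht
  exact Prod.ext_iff.1 <| eqOn_Icc_of_hasDerivWithinAt_clm hF (hcont hf) (hpair hf hf'')
    (hcont hg) (hpair hg hg'') (Prod.ext ha ha') ht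

end LinearODE

theorem exists_basis_on_iff_eq_finrank {K V E α : Type*} [Field K] [AddCommGroup V] [Module K V]
    [FiniteDimensional K V] [AddCommGroup E] [Module K E] {s : Set α} {S : (α → E) → Prop}
    (Φ : V →ₗ[K] α → E) (hsol : ∀ v, S (Φ v)) (hinj : ∀ v, (∀ x ∈ s, Φ v x = 0) → v = 0)
    (hsurj : ∀ φ, S φ → ∃ v, ∀ x ∈ s, φ x = Φ v x) (m : ℕ) :
    (∃ b : Fin m → α → E, (∀ i, S (b i)) ∧
      (∀ d : Fin m → K, (∀ x ∈ s, ∑ i, d i • b i x = 0) → d = 0) ∧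
      (∀ φ, S φ → ∃ d : Fin m → K, ∀ x ∈ s, φ x = ∑ i, d i • b i x)) ↔
    m = Module.finrank K V := by
  have hΦsum : ∀ (v : Fin m → V) (d : Fin m → K) x, Φ (∑ i, d i • v i) x = ∑ i, d i • Φ (v i) x :=
    fun v d x => by simp [map_sum, Finset.sum_apply]
  constructor
  · rintro ⟨b, hb, hli, hspan⟩
    choose v hv using fun i => hsurj _ (hb i)
    have hb_eq : ∀ (d : Fin m → K), ∀ x ∈ s, ∑ i, d i • b i x = Φ (∑ i, d i • v i) x :=
      fun d x hx => by simp only [hΦsum, hv _ x hx]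
    have hvli : LinearIndependent K v := Fintype.linearIndependent_iff.2 fun d hd =>
      congrFun (hli d fun x hx => by rw [hb_eq d x hx, hd, map_zero, Pi.zero_apply])
    have hvspan : ⊤ ≤ Submodule.span K (range v) := by
      intro w _
      obtain ⟨d, hd⟩ := hspan _ (hsol w)
      have hw : w = ∑ i, d i • v i := sub_eq_zero.1 <| hinj _ fun x hx => by
        rw [map_sub, Pi.sub_apply, ← hb_eq d x hx, ← hd x hx, sub_self]
      exact (Submodule.mem_span_range_iff_exists_fun K).2 ⟨d, hw.symm⟩
    rw [Module.finrank_eq_card_basis (Module.Basis.mk hvli hvspan), Fintype.card_fin]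
  · intro hm
    let e := Module.finBasisOfFinrankEq K V hm.symm
    refine ⟨fun i => Φ (e i), fun i => hsol _, fun d hd => ?_, fun φ hφ => ?_⟩
    · have h0 : ∑ i, d i • e i = 0 := hinj _ fun x hx => by rw [hΦsum, hd x hx]
      exact funext (Fintype.linearIndependent_iff.1 e.linearIndependent d h0)
    · obtain ⟨v, hv⟩ := hsurj φ hφ
      refine ⟨e.repr v, fun x hx => ?_⟩
      rw [hv x hx, ← hΦsum, e.sum_repr]

section SturmLiouville

variable {N : ℕ} {P : ℝ → Matrix (Fin N) (Fin N) ℝ} {A B 𝒜 ℬ : Matrix (Fin N) (Fin N) ℝ}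
  {l : ℝ} {Y : ℝ → Matrix (Fin N) (Fin N) ℝ}

theorem sl_equation_mulVec (hY : ContDiff ℝ 2 Y)
    (hYeq : ∀ x ∈ Icc (0:ℝ) Real.pi, -(deriv (deriv Y) x) + P x * Y x = l • Y x) (v : Fin N → ℝ) :
    ∀ x ∈ Icc (0:ℝ) Real.pi,
      -(deriv (deriv fun x => Y x *ᵥ v) x) + P x *ᵥ (Y x *ᵥ v) = l • (Y x *ᵥ v) := by
  intro x hx
  rw [deriv_deriv_mulVec_const hY, mulVec_mulVec, ← neg_mulVec, ← add_mulVec, hYeq x hx,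
    smul_mulVec]

theorem sl_solution_unique (hP : ContinuousOn P (Icc 0 Real.pi)) {φ ψ : ℝ → Fin N → ℝ}
    (hφ : ContDiff ℝ 2 φ) (hψ : ContDiff ℝ 2 ψ)
    (hφeq : ∀ x ∈ Icc (0:ℝ) Real.pi, -(deriv (deriv φ) x) + P x *ᵥ φ x = l • φ x)
    (hψeq : ∀ x ∈ Icc (0:ℝ) Real.pi, -(deriv (deriv ψ) x) + P x *ᵥ ψ x = l • ψ x)
    (h0 : φ 0 = ψ 0) (h0' : deriv φ 0 = deriv ψ 0) :
    ∀ x ∈ Icc (0:ℝ) Real.pi, φ x = ψ x ∧ deriv φ x = deriv ψ x := by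
  let Q : ℝ → (Fin N → ℝ) →L[ℝ] Fin N → ℝ := fun t =>
    LinearMap.toContinuousLinearMap (P t - l • 1).mulVecLin
  have hQ : ContinuousOn Q (Icc 0 Real.pi) := continuousOn_clm_apply.2 fun z =>
    (hP.sub continuousOn_const).mulVec_const z
  have hsecond : ∀ {u : ℝ → Fin N → ℝ},
      (∀ x ∈ Icc (0:ℝ) Real.pi, -(deriv (deriv u) x) + P x *ᵥ u x = l • u x) →
      ∀ x ∈ Icc (0:ℝ) Real.pi, deriv (deriv u) x = Q x (u x) := by
    intro u hu x hx
    simp only [Q, LinearMap.coe_toContinuousLinearMap', mulVecLin_apply, sub_mulVec, smul_mulVec,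
      one_mulVec, ← hu x hx]
    abel
  exact eqOn_Icc_of_deriv_deriv_eq hQ hφ hψ (hsecond hφeq) (hsecond hψeq) h0 h0'

theorem slSol_mulVec_of_mem_ker (hAB : B * Aᵀ = A * Bᵀ) (hY : ContDiff ℝ 2 Y)
    (hYeq : ∀ x ∈ Icc (0:ℝ) Real.pi, -(deriv (deriv Y) x) + P x * Y x = l • Y x)
    (hY0 : Y 0 = Bᵀ) (hY0' : deriv Y 0 = -Aᵀ) {v : Fin N → ℝ}
    (hv : v ∈ LinearMap.ker (ℬ * deriv Y Real.pi + 𝒜 * Y Real.pi).mulVecLin) :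
    SLSol N P A B 𝒜 ℬ l (fun x => Y x *ᵥ v) := by
  have hY' := hY.differentiable two_ne_zero
  refine ⟨hY.mulVec_const v, sl_equation_mulVec hY hYeq v, ?_, ?_⟩
  · simp only [deriv_mulVec_const (hY' 0), hY0, hY0', neg_mulVec, mulVec_neg, mulVec_mulVec, hAB,
      neg_add_cancel]
  · simpa [deriv_mulVec_const (hY' Real.pi), mulVec_mulVec, add_mulVec] using hv

theorem eq_zero_of_forall_mulVec_eq_zero (hrk : (fromCols A B).rank = N)
    (hY : Differentiable ℝ Y) (hY0 : Y 0 = Bᵀ) (hY0' : deriv Y 0 = -Aᵀ) {u : Fin N → ℝ}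
    (hu : ∀ x ∈ Icc (0:ℝ) Real.pi, Y x *ᵥ u = 0) : u = 0 := by
  have h0 : (0:ℝ) ∈ Icc 0 Real.pi := ⟨le_rfl, Real.pi_pos.le⟩
  have hB : Bᵀ *ᵥ u = 0 := hY0 ▸ hu 0 h0
  have hA : deriv (fun x => Y x *ᵥ u) 0 = deriv (fun _ : ℝ => (0 : Fin N → ℝ)) 0 :=
    deriv_eq_of_eqOn_Icc Real.pi_pos h0 ((hY 0).hasDerivAt.mulVec_const u).differentiableAt
      (differentiableAt_const 0) hu
  rw [deriv_mulVec_const (hY 0), hY0', deriv_const, neg_mulVec, neg_eq_zero] at hA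
  exact eq_zero_of_transpose_mulVec_eq_zero (by rwa [Fintype.card_fin]) hA hB

theorem exists_mem_ker_of_slSol (hP : ContinuousOn P (Icc 0 Real.pi)) (hAB : B * Aᵀ = A * Bᵀ)
    (hrk : (fromCols A B).rank = N) (hY : ContDiff ℝ 2 Y)
    (hYeq : ∀ x ∈ Icc (0:ℝ) Real.pi, -(deriv (deriv Y) x) + P x * Y x = l • Y x)
    (hY0 : Y 0 = Bᵀ) (hY0' : deriv Y 0 = -Aᵀ) {φ : ℝ → Fin N → ℝ}
    (hφ : SLSol N P A B 𝒜 ℬ l φ) :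
    ∃ v ∈ LinearMap.ker (ℬ * deriv Y Real.pi + 𝒜 * Y Real.pi).mulVecLin,
      ∀ x ∈ Icc (0:ℝ) Real.pi, φ x = Y x *ᵥ v := by
  obtain ⟨hφC, hφeq, hφ0, hφπ⟩ := hφ
  obtain ⟨v, hv⟩ : Sum.elim (φ 0) (deriv φ 0) ∈ LinearMap.range (fromRows Bᵀ (-Aᵀ)).mulVecLin := by
    rw [← ker_fromCols_mulVecLin_eq_range hAB (by rwa [Fintype.card_fin]), LinearMap.mem_ker,
      mulVecLin_apply, fromCols_mulVec_sumElim, add_comm, hφ0]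
  rw [mulVecLin_apply, fromRows_mulVec] at hv
  have hderiv := fun x => deriv_mulVec_const (hY.differentiable two_ne_zero x) v
  have huniq := sl_solution_unique hP hφC (hY.mulVec_const v) hφeq (sl_equation_mulVec hY hYeq v)
    (by rw [hY0]; exact (funext fun i => congrFun hv (Sum.inl i)).symm)
    (by rw [hderiv, hY0']; exact (funext fun i => congrFun hv (Sum.inr i)).symm)
  obtain ⟨hπ, hπ'⟩ := huniq Real.pi ⟨Real.pi_pos.le, le_rfl⟩
  refine ⟨v, ?_, fun x hx => (huniq x hx).1⟩
  rw [hderiv] at hπ'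
  rw [LinearMap.mem_ker, mulVecLin_apply, add_mulVec, ← mulVec_mulVec, ← mulVec_mulVec, ← hπ,
    ← hπ', hφπ]

end SturmLiouville

theorem nullspace_equiv_eigenspace
    (N : ℕ)
    (P : ℝ → Matrix (Fin N) (Fin N) ℝ) (A B 𝒜 ℬ : Matrix (Fin N) (Fin N) ℝ)
    (hP : ContinuousOn P (Set.Icc 0 Real.pi))
    (hAB : B * Aᵀ = A * Bᵀ)
    (hrkAB : (Matrix.fromCols A B).rank = N)
    -- `Y (·; l)` is the solution of the matrix initial value problem
    (Y : ℝ → ℝ → Matrix (Fin N) (Fin N) ℝ)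
    (hYC : ∀ l : ℝ, ContDiff ℝ 2 (fun x => Y x l))
    (hYeq : ∀ l : ℝ, ∀ x ∈ Set.Icc (0:ℝ) Real.pi,
      -(deriv (deriv (fun s => Y s l)) x) + P x * Y x l = l • Y x l)
    (hY0 : ∀ l : ℝ, Y 0 l = Bᵀ)
    (hY0' : ∀ l : ℝ, deriv (fun s => Y s l) 0 = -Aᵀ)
    -- the characteristic matrix `W(lam)`
    (lam : ℝ) (W : Matrix (Fin N) (Fin N) ℝ)
    (hW : W = ℬ * deriv (fun s => Y s lam) Real.pi + 𝒜 * Y Real.pi lam) :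
    (∀ v ∈ LinearMap.ker W.mulVecLin, SLSol N P A B 𝒜 ℬ lam (fun x => Y x lam *ᵥ v)) ∧
    (∀ v ∈ LinearMap.ker W.mulVecLin, ∀ w ∈ LinearMap.ker W.mulVecLin,
      (∀ x ∈ Set.Icc (0:ℝ) Real.pi, Y x lam *ᵥ v = Y x lam *ᵥ w) → v = w) ∧
    (∀ φ, SLSol N P A B 𝒜 ℬ lam φ → ∃ v ∈ LinearMap.ker W.mulVecLin,
      ∀ x ∈ Set.Icc (0:ℝ) Real.pi, φ x = Y x lam *ᵥ v) ∧
    (∀ m : ℕ, HasMultiplicity N P A B 𝒜 ℬ lam m ↔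
      m = Module.finrank ℝ (LinearMap.ker W.mulVecLin)) := by
  subst hW
  have hsol : ∀ v ∈ LinearMap.ker _, SLSol N P A B 𝒜 ℬ lam (fun x => Y x lam *ᵥ v) :=
    fun v => slSol_mulVec_of_mem_ker hAB (hYC lam) (hYeq lam) (hY0 lam) (hY0' lam)
  have hinj : ∀ u, (∀ x ∈ Icc (0:ℝ) Real.pi, Y x lam *ᵥ u = 0) → u = 0 := fun u =>
    eq_zero_of_forall_mulVec_eq_zero hrkAB ((hYC lam).differentiable two_ne_zero) (hY0 lam)
      (hY0' lam)
  have hsurj : ∀ φ, SLSol N P A B 𝒜 ℬ lam φ → ∃ v ∈ LinearMap.ker _,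
      ∀ x ∈ Icc (0:ℝ) Real.pi, φ x = Y x lam *ᵥ v := fun φ =>
    exists_mem_ker_of_slSol hP hAB hrkAB (hYC lam) (hYeq lam) (hY0 lam) (hY0' lam)
  refine ⟨hsol, fun v _ w _ h => sub_eq_zero.1 <| hinj _ fun x hx => by
    rw [mulVec_sub, h x hx, sub_self], hsurj, fun m => ?_⟩
  exact exists_basis_on_iff_eq_finrank
    ((LinearMap.pi fun x => (Y x lam).mulVecLin).comp (LinearMap.ker _).subtype)
    (fun v => hsol v v.2) (fun v hv => Subtype.ext (hinj v hv))
    (fun φ hφ => let ⟨v, hv, hφv⟩ := hsurj φ hφ; ⟨⟨v, hv⟩, hφv⟩) m
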